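/- There exists a constant C > 0 (depending on ν, α, δ, r, γ but not on t) such that for all t ≥ 0: ν ‖y_x(t)‖² + (δ/2) ‖y(t)‖_{L⁴}⁴ + e^{−2γt} ∫₀ᵗ e^{2γs} ( ‖y_t(s)‖² + r (x, y_t(s))² ) ds ≤ C e^{−2γt} ‖y₀‖₁². -/

import Mathlib

open MeasureTheory intervalIntegral Real Set

lemma hasDerivAt_x {f : ℝ → ℝ → ℝ} (hf : ContDiff ℝ (⊤ : ℕ∞) (Function.uncurry f)) (t x : ℝ) :
    HasDerivAt (f t) (fderiv ℝ (Function.uncurry f) (t, x) (0, 1)) x := by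
  have h1 : HasFDerivAt (Function.uncurry f) (fderiv ℝ (Function.uncurry f) (t, x)) (t, x) :=
    (hf.differentiable (by simp) (t, x)).hasFDerivAt
  have h2 : HasDerivAt (fun x : ℝ => ((t, x) : ℝ × ℝ)) (0, 1) x :=
    (hasDerivAt_const x t).prodMk (hasDerivAt_id x)
  exact h1.comp_hasDerivAt x h2

lemma hasDerivAt_t {f : ℝ → ℝ → ℝ} (hf : ContDiff ℝ (⊤ : ℕ∞) (Function.uncurry f)) (t x : ℝ) :
    HasDerivAt (fun s => f s x) (fderiv ℝ (Function.uncurry f) (t, x) (1, 0)) t := by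
  have h1 : HasFDerivAt (Function.uncurry f) (fderiv ℝ (Function.uncurry f) (t, x)) (t, x) :=
    (hf.differentiable (by simp) (t, x)).hasFDerivAt
  have h2 : HasDerivAt (fun s : ℝ => ((s, x) : ℝ × ℝ)) (1, 0) t :=
    (hasDerivAt_id t).prodMk (hasDerivAt_const t x)
  exact h1.comp_hasDerivAt t h2

lemma contDiff_fderiv_apply {f : ℝ → ℝ → ℝ} (hf : ContDiff ℝ (⊤ : ℕ∞) (Function.uncurry f)) (v : ℝ × ℝ) :
    ContDiff ℝ (⊤ : ℕ∞) (fun p : ℝ × ℝ => fderiv ℝ (Function.uncurry f) p v) := by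
  have h := hf.fderiv_right (m := (⊤ : ℕ∞)) (by simp)
  exact h.clm_apply contDiff_const

lemma contDiff_px {f : ℝ → ℝ → ℝ} (hf : ContDiff ℝ (⊤ : ℕ∞) (Function.uncurry f)) :
    ContDiff ℝ (⊤ : ℕ∞) (Function.uncurry (fun t x => deriv (f t) x)) := by
  have e : (Function.uncurry fun t x => deriv (f t) x)
      = fun p : ℝ × ℝ => fderiv ℝ (Function.uncurry f) p (0, 1) := by
    funext p
    cases p with
    | mk t x => exact (hasDerivAt_x hf t x).deriv
  rw [e]; exact contDiff_fderiv_apply hf _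

lemma contDiff_pt {f : ℝ → ℝ → ℝ} (hf : ContDiff ℝ (⊤ : ℕ∞) (Function.uncurry f)) :
    ContDiff ℝ (⊤ : ℕ∞) (Function.uncurry (fun t x => deriv (fun s => f s x) t)) := by
  have e : (Function.uncurry fun t x => deriv (fun s => f s x) t)
      = fun p : ℝ × ℝ => fderiv ℝ (Function.uncurry f) p (1, 0) := by
    funext p
    cases p with
    | mk t x => exact (hasDerivAt_t hf t x).deriv
  rw [e]; exact contDiff_fderiv_apply hf _

lemma fderiv_apply_deriv {f : ℝ → ℝ → ℝ} (hf : ContDiff ℝ (⊤ : ℕ∞) (Function.uncurry f)) (p : ℝ × ℝ)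
    (v w : ℝ × ℝ) :
    fderiv ℝ (fun q : ℝ × ℝ => fderiv ℝ (Function.uncurry f) q v) p w
      = fderiv ℝ (fderiv ℝ (Function.uncurry f)) p w v := by
  have hd : DifferentiableAt ℝ (fderiv ℝ (Function.uncurry f)) p :=
    ((hf.fderiv_right (m := (⊤ : ℕ∞)) (by simp)).differentiable (by simp)) p
  have := fderiv_clm_apply hd (differentiableAt_const v)
  rw [show (fun q : ℝ × ℝ => fderiv ℝ (Function.uncurry f) q v)
      = fun q : ℝ × ℝ => (fderiv ℝ (Function.uncurry f) q) ((fun _ => v) q) from rfl, this]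
  simp

lemma mixed_symm {f : ℝ → ℝ → ℝ} (hf : ContDiff ℝ (⊤ : ℕ∞) (Function.uncurry f)) (t x : ℝ) :
    deriv (fun s => deriv (f s) x) t = deriv (fun x' => deriv (fun s => f s x') t) x := by
  have hLHS : HasDerivAt (fun s => deriv (f s) x)
      (fderiv ℝ (Function.uncurry (fun t x => deriv (f t) x)) (t, x) (1, 0)) t :=
    hasDerivAt_t (contDiff_px hf) t x
  have hRHS : HasDerivAt (fun x' => deriv (fun s => f s x') t)
      (fderiv ℝ (Function.uncurry (fun t x => deriv (fun s => f s x) t)) (t, x) (0, 1)) x :=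
    hasDerivAt_x (contDiff_pt hf) t x
  rw [hLHS.deriv, hRHS.deriv]
  have e1 : (Function.uncurry fun t x => deriv (f t) x)
      = fun p : ℝ × ℝ => fderiv ℝ (Function.uncurry f) p (0, 1) := by
    funext p; cases p with | mk a b => exact (hasDerivAt_x hf a b).deriv
  have e2 : (Function.uncurry fun t x => deriv (fun s => f s x) t)
      = fun p : ℝ × ℝ => fderiv ℝ (Function.uncurry f) p (1, 0) := by
    funext p; cases p with | mk a b => exact (hasDerivAt_t hf a b).deriv
  rw [e1, e2, fderiv_apply_deriv hf _ _ _, fderiv_apply_deriv hf _ _ _]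
  have hsymm := second_derivative_symmetric
    (f := Function.uncurry f) (f' := fderiv ℝ (Function.uncurry f))
    (f'' := fderiv ℝ (fderiv ℝ (Function.uncurry f)) (t, x)) (x := (t, x))
    (fun q => ((hf.differentiable (by simp)) q).hasFDerivAt)
    (((hf.fderiv_right (m := (⊤ : ℕ∞)) (by simp)).differentiable (by simp) (t, x)).hasFDerivAt)
  exact hsymm (1,0) (0,1)


lemma cs_integral {f g : ℝ → ℝ} {a b : ℝ} (hab : a ≤ b)
    (hf : ContinuousOn f (Icc a b)) (hg : ContinuousOn g (Icc a b)) :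
    (∫ x in a..b, f x * g x) ^ 2 ≤ (∫ x in a..b, (f x) ^ 2) * (∫ x in a..b, (g x) ^ 2) := by
  have hu : uIcc a b = Icc a b := uIcc_of_le hab
  have hf' : ContinuousOn f (uIcc a b) := hu ▸ hf
  have hg' : ContinuousOn g (uIcc a b) := hu ▸ hg
  have hif : IntervalIntegrable (fun x => (f x) ^ 2) volume a b :=
    (hf'.pow 2).intervalIntegrable
  have hig : IntervalIntegrable (fun x => (g x) ^ 2) volume a b :=
    (hg'.pow 2).intervalIntegrable
  have hifg : IntervalIntegrable (fun x => f x * g x) volume a b :=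
    (hf'.mul hg').intervalIntegrable
  set A := ∫ x in a..b, (g x) ^ 2 with hA
  set B := ∫ x in a..b, f x * g x with hB
  set Cc := ∫ x in a..b, (f x) ^ 2 with hC
  have key : ∀ lam : ℝ, 0 ≤ A * (lam * lam) + (2 * B) * lam + Cc := by
    intro lam
    have h0 : 0 ≤ ∫ x in a..b, (lam * g x + f x) ^ 2 :=
      intervalIntegral.integral_nonneg hab (fun u _ => sq_nonneg _)
    have hexp : (∫ x in a..b, (lam * g x + f x) ^ 2)
        = lam ^ 2 * A + 2 * lam * B + Cc := by
      have : (fun x => (lam * g x + f x) ^ 2)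
          = fun x => lam ^ 2 * (g x) ^ 2 + (2 * lam) * (f x * g x) + (f x) ^ 2 := by
        funext x; ring
      rw [this, intervalIntegral.integral_add (((hig.const_mul _).add (hifg.const_mul _))) hif,
        intervalIntegral.integral_add (hig.const_mul _) (hifg.const_mul _),
        intervalIntegral.integral_const_mul, intervalIntegral.integral_const_mul]
    nlinarith [hexp ▸ h0]
  have hd := discrim_le_zero key
  rw [discrim] at hd
  nlinarith [hd]

lemma hasDerivAt_integ {F F' : ℝ → ℝ → ℝ} (hF : Continuous (Function.uncurry F))
    (hF' : Continuous (Function.uncurry F'))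
    (hd : ∀ t x, HasDerivAt (fun s => F s x) (F' t x) t) (t₀ : ℝ) :
    HasDerivAt (fun t => ∫ x in (0:ℝ)..1, F t x) (∫ x in (0:ℝ)..1, F' t₀ x) t₀ := by
  have hK : IsCompact ((Icc (t₀ - 1) (t₀ + 1)) ×ˢ (Icc (0:ℝ) 1)) :=
    (isCompact_Icc).prod isCompact_Icc
  obtain ⟨Cb, hCb⟩ := hK.exists_bound_of_continuousOn hF'.continuousOn
  have main := intervalIntegral.hasDerivAt_integral_of_dominated_loc_of_deriv_le
    (F := F) (F' := F') (x₀ := t₀) (a := 0) (b := 1) (bound := fun _ => Cb)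
    (μ := volume) (s := Metric.ball t₀ 1) (Metric.ball_mem_nhds t₀ one_pos)
    (Filter.Eventually.of_forall (fun s =>
      ((hF.comp (continuous_const.prodMk continuous_id)).aestronglyMeasurable)))
    ((hF.comp (continuous_const.prodMk continuous_id)).intervalIntegrable 0 1)
    ((hF'.comp (continuous_const.prodMk continuous_id)).aestronglyMeasurable)
    (Filter.Eventually.of_forall (fun x hx s hs => by
      have hs' : s ∈ Icc (t₀ - 1) (t₀ + 1) := by
        have := Metric.mem_ball.mp hs
        rw [Real.dist_eq] at this
        constructor <;> [linarith [abs_lt.mp this |>.1]; linarith [abs_lt.mp this |>.2]]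
      have hx' : x ∈ Icc (0:ℝ) 1 := by
        rw [uIoc_of_le (by norm_num : (0:ℝ) ≤ 1)] at hx
        exact ⟨le_of_lt hx.1, hx.2⟩
      exact hCb (s, x) ⟨hs', hx'⟩))
    (intervalIntegrable_const)
    (Filter.Eventually.of_forall (fun x _ s _ => hd s x))
  exact main.2

lemma le_initial {Z Z' : ℝ → ℝ} (hZ : ∀ t, HasDerivAt Z (Z' t) t)
    (hle : ∀ t > (0:ℝ), Z' t ≤ 0) : ∀ t ≥ (0:ℝ), Z t ≤ Z 0 := by
  intro t ht
  have hanti : AntitoneOn Z (Ici (0:ℝ)) := by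
    apply antitoneOn_of_deriv_nonpos (convex_Ici 0)
    · exact fun s _ => ((hZ s).differentiableAt.continuousAt).continuousWithinAt
    · exact fun s _ => ((hZ s).differentiableAt).differentiableWithinAt
    · intro s hs
      rw [interior_Ici] at hs
      rw [(hZ s).deriv]
      exact hle s hs
  exact hanti (self_mem_Ici) ht ht

lemma hasDerivAt_cumul {g : ℝ → ℝ} (hg : Continuous g) (t : ℝ) :
    HasDerivAt (fun u => ∫ s in (0:ℝ)..u, g s) (g t) t :=
  intervalIntegral.integral_hasDerivAt_right (hg.intervalIntegrable 0 t)
    (hg.stronglyMeasurableAtFilter _ _) hg.continuousAt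


lemma integral_weight : ∀ x : ℝ, ∫ s in (0:ℝ)..x, (1 - s/2) = x - x^2/4 := by
  intro x
  have key := intervalIntegral.integral_eq_sub_of_hasDerivAt
    (f := fun u : ℝ => u - u^2/4) (f' := fun u : ℝ => 1 - u/2) (a := 0) (b := x) ?_ ?_
  · rw [key]; ring
  · intro u _
    have h1 : HasDerivAt (fun u : ℝ => u - u^2/4) (1 - (2 * u^(2-1))/4) u :=
      (hasDerivAt_id u).sub ((hasDerivAt_pow 2 u).div_const 4)
    exact h1.congr_deriv (by ring)
  · exact (continuous_const.sub (continuous_id.div_const 2)).intervalIntegrable 0 x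

lemma sq_le_tail {g g' : ℝ → ℝ} (hg : ∀ x, HasDerivAt g (g' x) x) (hc : Continuous g')
    (h0 : g 0 = 0) : ∀ x ∈ Icc (0:ℝ) 1, (g x)^2 ≤ ∫ s in (0:ℝ)..1, (g' s)^2 := by
  intro x hx
  have rep : g x = ∫ s in (0:ℝ)..x, g' s := by
    rw [intervalIntegral.integral_eq_sub_of_hasDerivAt (fun s _ => hg s)
      (hc.intervalIntegrable 0 x), h0, sub_zero]
  have cs := cs_integral (f := fun _ => (1:ℝ)) (g := g') hx.1
    continuousOn_const hc.continuousOn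
  have e1 : (∫ s in (0:ℝ)..x, (1:ℝ) * g' s) = g x := by rw [rep]; simp
  have e2 : (∫ s in (0:ℝ)..x, ((1:ℝ))^2) = x := by simp
  rw [e1, e2] at cs
  have mono : (∫ s in (0:ℝ)..x, (g' s)^2) ≤ ∫ s in (0:ℝ)..1, (g' s)^2 := by
    rw [← intervalIntegral.integral_add_adjacent_intervals
      (show IntervalIntegrable (fun s => g' s ^ 2) volume 0 x from (hc.pow 2).intervalIntegrable 0 x)
      (show IntervalIntegrable (fun s => g' s ^ 2) volume x 1 from (hc.pow 2).intervalIntegrable x 1)]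
    have : 0 ≤ ∫ s in x..1, (g' s)^2 :=
      intervalIntegral.integral_nonneg hx.2 (fun s _ => sq_nonneg _)
    linarith
  have hxnn : (0:ℝ) ≤ ∫ s in (0:ℝ)..x, (g' s)^2 :=
    intervalIntegral.integral_nonneg hx.1 (fun s _ => sq_nonneg _)
  nlinarith [cs, mono, hx.1, hx.2]

lemma poincare {g g' : ℝ → ℝ} (hg : ∀ x, HasDerivAt g (g' x) x) (hc : Continuous g')
    (h0 : g 0 = 0) :
    (∫ x in (0:ℝ)..1, (g x)^2) ≤ (9/20) * ∫ x in (0:ℝ)..1, (g' x)^2 := by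
  have hgc : Continuous g := by
    rw [continuous_iff_continuousAt]; exact fun x => (hg x).continuousAt
  set p : ℝ → ℝ := fun s => (g' s)^2 / (1 - s/2) with hp
  have hpc : ContinuousOn p (Iio (2:ℝ)) := by
    apply ContinuousOn.div (hc.pow 2).continuousOn
      (Continuous.continuousOn (continuous_const.sub (continuous_id.div_const 2)))
    intro s hs hcon
    simp only [mem_Iio] at hs
    simp only [id, Pi.sub_apply] at hcon
    linarith
  set h : ℝ → ℝ := fun x => ∫ s in (0:ℝ)..x, p s with hhdef
  have hpderiv : ∀ u ∈ Icc (0:ℝ) 1, HasDerivAt h (p u) u := by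
    intro u hu
    have hu2 : u < 2 := by linarith [hu.2]
    apply intervalIntegral.integral_hasDerivAt_right
    · apply (hpc.mono _).intervalIntegrable
      rw [uIcc_of_le hu.1]
      intro s hs; exact lt_of_le_of_lt hs.2 hu2
    · exact ⟨Iio 2, Iio_mem_nhds hu2, hpc.aestronglyMeasurable measurableSet_Iio⟩
    · exact hpc.continuousAt (Iio_mem_nhds hu2)
  have hhcont : ContinuousOn h (Icc (0:ℝ) 1) :=
    fun u hu => ((hpderiv u hu).continuousAt).continuousWithinAt
  -- pointwise weighted Cauchy-Schwarz
  have hw : ∀ x ∈ Icc (0:ℝ) 1, (g x)^2 ≤ (x - x^2/4) * h x := by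
    intro x hx
    have rep : g x = ∫ s in (0:ℝ)..x, g' s := by
      rw [intervalIntegral.integral_eq_sub_of_hasDerivAt (fun s _ => hg s)
        (hc.intervalIntegrable 0 x), h0, sub_zero]
    have hwpos : ∀ s ∈ Icc (0:ℝ) x, (0:ℝ) < 1 - s/2 := by
      intro s hs; have := hs.2; have := hx.2; have := hs.1; nlinarith
    have hsqrtpos : ∀ s ∈ Icc (0:ℝ) x, (0:ℝ) < Real.sqrt (1 - s/2) :=
      fun s hs => Real.sqrt_pos.mpr (hwpos s hs)
    have f1c : ContinuousOn (fun s => Real.sqrt (1 - s/2)) (Icc 0 x) :=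
      (Real.continuous_sqrt.comp (continuous_const.sub (continuous_id.div_const 2))).continuousOn
    have f2c : ContinuousOn (fun s => g' s / Real.sqrt (1 - s/2)) (Icc 0 x) := by
      apply ContinuousOn.div hc.continuousOn f1c
      exact fun s hs => ne_of_gt (hsqrtpos s hs)
    have cs := cs_integral hx.1 f1c f2c
    have e1 : (∫ s in (0:ℝ)..x, Real.sqrt (1 - s/2) * (g' s / Real.sqrt (1 - s/2))) = g x := by
      rw [rep]
      apply intervalIntegral.integral_congr
      intro s hs
      rw [uIcc_of_le hx.1] at hs
      show Real.sqrt (1 - s/2) * (g' s / Real.sqrt (1 - s/2)) = g' s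
      rw [mul_comm]
      exact div_mul_cancel₀ _ (ne_of_gt (hsqrtpos s hs))
    have e2 : (∫ s in (0:ℝ)..x, (Real.sqrt (1 - s/2))^2) = x - x^2/4 := by
      rw [← integral_weight x]
      apply intervalIntegral.integral_congr
      intro s hs
      rw [uIcc_of_le hx.1] at hs
      exact Real.sq_sqrt (hwpos s hs).le
    have e3 : (∫ s in (0:ℝ)..x, (g' s / Real.sqrt (1 - s/2))^2) = h x := by
      apply intervalIntegral.integral_congr
      intro s hs
      rw [uIcc_of_le hx.1] at hs
      show (g' s / Real.sqrt (1 - s/2))^2 = p s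
      simp only [hp, div_pow]
      rw [Real.sq_sqrt (hwpos s hs).le]
    rw [e1, e2, e3] at cs
    exact cs
  have mono1 : (∫ x in (0:ℝ)..1, (g x)^2) ≤ ∫ x in (0:ℝ)..1, (x - x^2/4) * h x := by
    apply intervalIntegral.integral_mono_on (by norm_num : (0:ℝ) ≤ 1)
      ((hgc.pow 2).intervalIntegrable 0 1)
    · apply ContinuousOn.intervalIntegrable
      rw [uIcc_of_le (by norm_num : (0:ℝ) ≤ 1)]
      exact (Continuous.continuousOn (by fun_prop)).mul hhcont
    · exact hw
  -- integration by parts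
  set Q : ℝ → ℝ := fun x => 5/12 - x^2/2 + x^3/12 with hQdef
  have hQ : ∀ u : ℝ, HasDerivAt Q (-(u - u^2/4)) u := by
    intro u
    have h1 : HasDerivAt (fun x : ℝ => 5/12 - x^2/2 + x^3/12)
        (0 - (2 * u^(2-1))/2 + (3 * u^(3-1))/12) u := by
      exact (((hasDerivAt_const u (5/12:ℝ)).sub ((hasDerivAt_pow 2 u).div_const 2)).add
        ((hasDerivAt_pow 3 u).div_const 12))
    convert h1 using 1
    norm_num; ring
  have ibp : (∫ x in (0:ℝ)..1, (-(x - x^2/4) * h x + Q x * p x)) = 0 := by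
    have key := intervalIntegral.integral_eq_sub_of_hasDerivAt
      (f := fun x => Q x * h x) (f' := fun x => -(x - x^2/4) * h x + Q x * p x)
      (a := 0) (b := 1) ?_ ?_
    · rw [key]
      have hQ1 : Q 1 = 0 := by simp [hQdef]; norm_num
      have hh0 : h 0 = 0 := intervalIntegral.integral_same
      rw [hQ1, hh0]; ring
    · intro x hx
      rw [uIcc_of_le (by norm_num : (0:ℝ) ≤ 1)] at hx
      exact (hQ x).mul (hpderiv x hx)
    · apply ContinuousOn.intervalIntegrable
      rw [uIcc_of_le (by norm_num : (0:ℝ) ≤ 1)]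
      apply ContinuousOn.add
      · exact (Continuous.continuousOn (by fun_prop)).mul hhcont
      · refine (Continuous.continuousOn (by fun_prop)).mul ?_
        exact hpc.mono (fun s hs => by simp only [mem_Iio]; linarith [hs.2])
  have split : (∫ x in (0:ℝ)..1, (x - x^2/4) * h x) = ∫ x in (0:ℝ)..1, Q x * p x := by
    have i1 : IntervalIntegrable (fun x => (x - x^2/4) * h x) volume 0 1 := by
      apply ContinuousOn.intervalIntegrable
      rw [uIcc_of_le (by norm_num : (0:ℝ) ≤ 1)]
      exact (Continuous.continuousOn (by fun_prop)).mul hhcont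
    have i2 : IntervalIntegrable (fun x => Q x * p x) volume 0 1 := by
      apply ContinuousOn.intervalIntegrable
      rw [uIcc_of_le (by norm_num : (0:ℝ) ≤ 1)]
      refine (Continuous.continuousOn (by fun_prop)).mul ?_
      exact hpc.mono (fun s hs => by simp only [mem_Iio]; linarith [hs.2])
    have : (∫ x in (0:ℝ)..1, (-(x - x^2/4) * h x + Q x * p x))
        = (∫ x in (0:ℝ)..1, Q x * p x) - ∫ x in (0:ℝ)..1, (x - x^2/4) * h x := by
      rw [show (fun x => (-(x - x^2/4) * h x + Q x * p x))
          = fun x => Q x * p x - (x - x^2/4) * h x from by funext x; ring]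
      exact intervalIntegral.integral_sub i2 i1
    rw [ibp] at this
    linarith
  have mono2 : (∫ x in (0:ℝ)..1, Q x * p x) ≤ ∫ x in (0:ℝ)..1, (9/20) * (g' x)^2 := by
    apply intervalIntegral.integral_mono_on (by norm_num : (0:ℝ) ≤ 1)
    · apply ContinuousOn.intervalIntegrable
      rw [uIcc_of_le (by norm_num : (0:ℝ) ≤ 1)]
      refine (Continuous.continuousOn (by fun_prop)).mul ?_
      exact hpc.mono (fun s hs => by simp only [mem_Iio]; linarith [hs.2])
    · exact (continuous_const.mul (hc.pow 2)).intervalIntegrable 0 1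
    · intro u hu
      have hwpos : (0:ℝ) < 1 - u/2 := by nlinarith [hu.1, hu.2]
      have cubic : Q u ≤ (9/20) * (1 - u/2) := by
        simp only [hQdef]
        nlinarith [hu.1, hu.2, sq_nonneg (u - 1/4), sq_nonneg u, mul_nonneg hu.1 hu.1,
          mul_nonneg (mul_nonneg hu.1 hu.1) hu.1, sq_nonneg (u-1), mul_nonneg hu.1 (sq_nonneg (u-1))]
      have hAnn : (0:ℝ) ≤ (g' u)^2 / (1 - u/2) := div_nonneg (sq_nonneg _) hwpos.le
      have hcanc : (1 - u/2) * ((g' u)^2 / (1 - u/2)) = (g' u)^2 :=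
        mul_div_cancel₀ _ (ne_of_gt hwpos)
      calc Q u * p u ≤ ((9/20) * (1 - u/2)) * ((g' u)^2 / (1 - u/2)) :=
            mul_le_mul_of_nonneg_right cubic hAnn
        _ = (9/20) * ((1 - u/2) * ((g' u)^2 / (1 - u/2))) := by ring
        _ = (9/20) * (g' u)^2 := by rw [hcanc]
  calc (∫ x in (0:ℝ)..1, (g x)^2) ≤ ∫ x in (0:ℝ)..1, (x - x^2/4) * h x := mono1
    _ = ∫ x in (0:ℝ)..1, Q x * p x := split
    _ ≤ ∫ x in (0:ℝ)..1, (9/20) * (g' x)^2 := mono2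
    _ = (9/20) * ∫ x in (0:ℝ)..1, (g' x)^2 := intervalIntegral.integral_const_mul _ _


lemma integ_nonneg01 {f : ℝ → ℝ} (h : ∀ x ∈ Icc (0:ℝ) 1, 0 ≤ f x) :
    0 ≤ ∫ x in (0:ℝ)..1, f x :=
  intervalIntegral.integral_nonneg (by norm_num) h

lemma cs01 {f g : ℝ → ℝ} (hf : Continuous f) (hg : Continuous g) :
    (∫ x in (0:ℝ)..1, f x * g x) ^ 2
      ≤ (∫ x in (0:ℝ)..1, (f x) ^ 2) * (∫ x in (0:ℝ)..1, (g x) ^ 2) :=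
  cs_integral (by norm_num) hf.continuousOn hg.continuousOn

lemma integral_xsq : (∫ x in (0:ℝ)..1, x^2) = 1/3 := by
  rw [integral_pow]; norm_num

lemma integral_x4 : (∫ x in (0:ℝ)..1, x^4) = 1/5 := by
  rw [integral_pow]; norm_num

lemma integral_x1 : (∫ x in (0:ℝ)..1, x) = 1/2 := by
  rw [integral_id]; norm_num

/-- `(x, v)² ≤ (1/3)‖v‖²` -/
lemma xInner_sq_le {v : ℝ → ℝ} (hv : Continuous v) :
    (∫ x in (0:ℝ)..1, x * v x) ^ 2 ≤ (1/3) * ∫ x in (0:ℝ)..1, (v x)^2 := by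
  have h := cs01 continuous_id hv
  simp only [id] at h
  rw [integral_xsq] at h
  linarith [h]

/-- `(x, v)⁴ ≤ (1/12)‖v‖₄⁴` -/
lemma xInner_quart_le {v : ℝ → ℝ} (hv : Continuous v) :
    (∫ x in (0:ℝ)..1, x * v x) ^ 4 ≤ (1/12) * ∫ x in (0:ℝ)..1, (v x)^4 := by
  set T := ∫ x in (0:ℝ)..1, x * (v x)^2 with hT
  have h1 : (∫ x in (0:ℝ)..1, x * v x) ^ 2 ≤ (1/2) * T := by
    have cs := cs01 (f := fun x => Real.sqrt x) (g := fun x => Real.sqrt x * v x) (Real.continuous_sqrt) (Real.continuous_sqrt.mul hv)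
    have e1 : (∫ x in (0:ℝ)..1, Real.sqrt x * (Real.sqrt x * v x))
        = ∫ x in (0:ℝ)..1, x * v x := by
      apply intervalIntegral.integral_congr
      intro s hs
      rw [uIcc_of_le (by norm_num : (0:ℝ) ≤ 1)] at hs
      show Real.sqrt s * (Real.sqrt s * v s) = s * v s
      rw [← mul_assoc, Real.mul_self_sqrt hs.1]
    have e2 : (∫ x in (0:ℝ)..1, (Real.sqrt x)^2) = 1/2 := by
      rw [← integral_x1]
      apply intervalIntegral.integral_congr
      intro s hs
      rw [uIcc_of_le (by norm_num : (0:ℝ) ≤ 1)] at hs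
      exact Real.sq_sqrt hs.1
    have e3 : (∫ x in (0:ℝ)..1, (Real.sqrt x * v x)^2) = T := by
      rw [hT]
      apply intervalIntegral.integral_congr
      intro s hs
      rw [uIcc_of_le (by norm_num : (0:ℝ) ≤ 1)] at hs
      show (Real.sqrt s * v s)^2 = s * (v s)^2
      rw [mul_pow, Real.sq_sqrt hs.1]
    rw [e1, e2, e3] at cs
    linarith [cs]
  have h2 : T ^ 2 ≤ (1/3) * ∫ x in (0:ℝ)..1, (v x)^4 := by
    have cs := cs01 (f := id) (g := fun x => v x ^ 2) continuous_id (hv.pow 2)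
    have e1 : (∫ x in (0:ℝ)..1, id x * (v x)^2) = T := by rw [hT]; rfl
    have e3 : (∫ x in (0:ℝ)..1, ((v x)^2)^2) = ∫ x in (0:ℝ)..1, (v x)^4 := by
      apply intervalIntegral.integral_congr; intro s _; show ((v s)^2)^2 = (v s)^4; ring
    have e2 : (∫ x in (0:ℝ)..1, (id x)^2) = 1/3 := by
      rw [← integral_xsq]; rfl
    rw [e1, e2, e3] at cs
    linarith [cs]
  have hTnn : 0 ≤ T :=
    integ_nonneg01 (fun s hs => mul_nonneg hs.1 (sq_nonneg _))
  nlinarith [h1, h2, sq_nonneg (∫ x in (0:ℝ)..1, x * v x)]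

/-- `(x, v³)⁴ ≤ (1/5)‖v‖₄¹²` and `(x,v³)² ≤ ‖v‖²‖v‖₄⁴`. -/
lemma xInner_cube_quart_le {v : ℝ → ℝ} (hv : Continuous v) :
    (∫ x in (0:ℝ)..1, x * (v x)^3) ^ 4 ≤ (1/5) * (∫ x in (0:ℝ)..1, (v x)^4) ^ 3 := by
  set q := ∫ x in (0:ℝ)..1, (v x)^4 with hq
  set S := ∫ x in (0:ℝ)..1, x^2 * (v x)^2 with hS
  have h1 : (∫ x in (0:ℝ)..1, x * (v x)^3) ^ 2 ≤ S * q := by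
    have cs := cs01 (f := fun x => id x * v x) (g := fun x => v x ^ 2) (continuous_id.mul hv) (hv.pow 2)
    have e1 : (∫ x in (0:ℝ)..1, (id x * v x) * (v x)^2) = ∫ x in (0:ℝ)..1, x * (v x)^3 := by
      apply intervalIntegral.integral_congr; intro s _
      show (s * v s) * (v s)^2 = s * (v s)^3; ring
    have e2 : (∫ x in (0:ℝ)..1, (id x * v x)^2) = S := by
      rw [hS]; apply intervalIntegral.integral_congr; intro s _
      show (s * v s)^2 = s^2 * (v s)^2; ring
    have e3 : (∫ x in (0:ℝ)..1, ((v x)^2)^2) = q := by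
      rw [hq]; apply intervalIntegral.integral_congr; intro s _
      show ((v s)^2)^2 = (v s)^4; ring
    rw [e1, e2, e3] at cs
    exact cs
  have h2 : S ^ 2 ≤ (1/5) * q := by
    have cs := cs01 (f := fun x => x ^ 2) (g := fun x => v x ^ 2) (continuous_pow 2) (hv.pow 2)
    have e1 : (∫ x in (0:ℝ)..1, x^2 * (v x)^2) = S := by rw [hS]
    have e2 : (∫ x in (0:ℝ)..1, (x^2)^2) = 1/5 := by
      rw [← integral_x4]
      apply intervalIntegral.integral_congr; intro s _; show (s^2)^2 = s^4; ring
    have e3 : (∫ x in (0:ℝ)..1, ((v x)^2)^2) = q := by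
      rw [hq]; apply intervalIntegral.integral_congr; intro s _
      show ((v s)^2)^2 = (v s)^4; ring
    rw [e1, e2, e3] at cs
    linarith [cs]
  have hSnn : 0 ≤ S := integ_nonneg01 (fun s hs => mul_nonneg (sq_nonneg _) (sq_nonneg _))
  have hqnn : 0 ≤ q := integ_nonneg01 (fun s hs => by positivity)
  have h3 : (∫ x in (0:ℝ)..1, x * (v x)^3) ^ 4 ≤ (S*q)^2 := by
    nlinarith [h1, sq_nonneg (∫ x in (0:ℝ)..1, x * (v x)^3), mul_nonneg hSnn hqnn]
  have h5 : S^2*q^2 ≤ (1/5*q)*q^2 := mul_le_mul_of_nonneg_right h2 (by positivity)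
  nlinarith [h3, h5]

lemma xInner_cube_sq_le {v : ℝ → ℝ} (hv : Continuous v) :
    (∫ x in (0:ℝ)..1, x * (v x)^3) ^ 2
      ≤ (∫ x in (0:ℝ)..1, (v x)^2) * (∫ x in (0:ℝ)..1, (v x)^4) := by
  set q := ∫ x in (0:ℝ)..1, (v x)^4 with hq
  set S := ∫ x in (0:ℝ)..1, x^2 * (v x)^2 with hS
  have h1 : (∫ x in (0:ℝ)..1, x * (v x)^3) ^ 2 ≤ S * q := by
    have cs := cs01 (f := fun x => id x * v x) (g := fun x => v x ^ 2) (continuous_id.mul hv) (hv.pow 2)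
    have e1 : (∫ x in (0:ℝ)..1, (id x * v x) * (v x)^2) = ∫ x in (0:ℝ)..1, x * (v x)^3 := by
      apply intervalIntegral.integral_congr; intro s _
      show (s * v s) * (v s)^2 = s * (v s)^3; ring
    have e2 : (∫ x in (0:ℝ)..1, (id x * v x)^2) = S := by
      rw [hS]; apply intervalIntegral.integral_congr; intro s _
      show (s * v s)^2 = s^2 * (v s)^2; ring
    have e3 : (∫ x in (0:ℝ)..1, ((v x)^2)^2) = q := by
      rw [hq]; apply intervalIntegral.integral_congr; intro s _
      show ((v s)^2)^2 = (v s)^4; ring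
    rw [e1, e2, e3] at cs
    exact cs
  have h2 : S ≤ ∫ x in (0:ℝ)..1, (v x)^2 := by
    apply intervalIntegral.integral_mono_on (by norm_num : (0:ℝ) ≤ 1)
    · exact ((continuous_pow 2).mul (hv.pow 2)).intervalIntegrable 0 1
    · exact (hv.pow 2).intervalIntegrable 0 1
    · intro s hs
      have h1 : s^2 ≤ 1 := by nlinarith [hs.1, hs.2]
      nlinarith [sq_nonneg (v s)]
  have hqnn : 0 ≤ q := integ_nonneg01 (fun s hs => by positivity)
  nlinarith [h1, h2]


lemma hasDerivAt_sq {f : ℝ → ℝ} {f' : ℝ} {t : ℝ} (h : HasDerivAt f f' t) :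
    HasDerivAt (fun s => (f s)^2) (2*(f t * f')) t := by
  have h2 := h.pow 2
  norm_num [mul_assoc] at h2
  exact h2

lemma hasDerivAt_pow4 {f : ℝ → ℝ} {f' : ℝ} {t : ℝ} (h : HasDerivAt f f' t) :
    HasDerivAt (fun s => (f s)^4) (4*((f t)^3 * f')) t := by
  have h2 := h.pow 4
  norm_num [mul_assoc] at h2
  exact h2

lemma hasDerivAt_exp2 (c t : ℝ) : HasDerivAt (fun s => Real.exp (c*s)) (c * Real.exp (c*t)) t := by
  have h := ((hasDerivAt_id t).const_mul c).exp
  simpa [mul_comm] using h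

lemma neg_le_of_quart {X q : ℝ} (hq : 0 ≤ q) (h4 : X^4 ≤ (3/5) * q^4) : -X ≤ (9/10) * q := by
  by_contra hcon
  push_neg at hcon
  have hB : (0:ℝ) ≤ (9/10)*q := by positivity
  have h5 : ((9/10)*q)^2 < X^2 := by nlinarith
  have h6 : ((9/10)*q)^4 < X^4 := by nlinarith [sq_nonneg X, sq_nonneg ((9/10)*q)]
  nlinarith [pow_nonneg hq 4]

/-- `L²(0,1)` norm squared: `‖v‖² = ∫₀¹ v(x)² dx`. -/
noncomputable def L2sq (v : ℝ → ℝ) : ℝ := ∫ x in (0:ℝ)..1, (v x)^2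

/-- `L⁴(0,1)` norm to the fourth power: `‖v‖_{L⁴}⁴ = ∫₀¹ v(x)⁴ dx`. -/
noncomputable def L4q (v : ℝ → ℝ) : ℝ := ∫ x in (0:ℝ)..1, (v x)^4

/-- Weighted inner product `(x, v) = ∫₀¹ x v(x) dx`. -/
noncomputable def xInner (v : ℝ → ℝ) : ℝ := ∫ x in (0:ℝ)..1, x * v x

/-- Sobolev `H^k(0,1)` norm squared: `‖v‖_k² = Σ_{i=0}^{k} ∫₀¹ (∂ₓⁱ v)² dx`. -/
noncomputable def HkSq (k : ℕ) (v : ℝ → ℝ) : ℝ :=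
  ∑ i ∈ Finset.range (k+1), ∫ x in (0:ℝ)..1, (iteratedDeriv i v x)^2

/-- Spatial derivative `y_x(t, ·)`. -/
noncomputable def dx (y : ℝ → ℝ → ℝ) (t : ℝ) : ℝ → ℝ := deriv (y t)

/-- Second spatial derivative `y_{xx}(t, ·)`. -/
noncomputable def dxx (y : ℝ → ℝ → ℝ) (t : ℝ) : ℝ → ℝ := iteratedDeriv 2 (y t)

/-- Time derivative `y_t(t, ·)`. -/
noncomputable def dt1 (y : ℝ → ℝ → ℝ) (t : ℝ) : ℝ → ℝ := fun x => deriv (fun s => y s x) t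

/-- Second time derivative `y_{tt}(t, ·)`. -/
noncomputable def dtt (y : ℝ → ℝ → ℝ) (t : ℝ) : ℝ → ℝ := fun x => iteratedDeriv 2 (fun s => y s x) t

/-- Mixed derivative `y_{xt}(t, ·)`. -/
noncomputable def dxt (y : ℝ → ℝ → ℝ) (t : ℝ) : ℝ → ℝ := deriv (dt1 y t)

/-- Mixed derivative `y_{xxt}(t, ·)`. -/
noncomputable def dxxt (y : ℝ → ℝ → ℝ) (t : ℝ) : ℝ → ℝ := iteratedDeriv 2 (dt1 y t)

set_option maxHeartbeats 4000000 in
theorem dirichlet_H1_stabilization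
    (ν α δ r γ : ℝ) (y : ℝ → ℝ → ℝ)
    (hν : 0 < ν) (hα : 0 < α) (hδ : 0 < δ) (hr0 : 0 < r) (hγ0 : 0 < γ)
    -- smooth classical solution (C^∞ up to the boundary)
    (hsmooth : ContDiff ℝ (⊤ : ℕ∞) (Function.uncurry y))
    -- controlled Chafee–Infante equation y_t = ν y_xx + α y − δ y³ on (0,∞) × (0,1)
    (hpde : ∀ t > (0:ℝ), ∀ x ∈ Set.Ioo (0:ℝ) 1,
      dt1 y t x = ν * dxx y t x + α * y t x - δ * (y t x)^3)
    -- boundary conditions: y(t,0) = 0 and Dirichlet feedback y(t,1) = u(t) = −r ∫₀¹ x y(t,x) dx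
    (hbc0 : ∀ t ≥ (0:ℝ), y t 0 = 0)
    (hbc1 : ∀ t > (0:ℝ), y t 1 = -r * xInner (y t))
    -- stabilization assumptions
    (hcond1 : α / ν ≤ (6 - r^2) / (r + 3))
    (hcond2 : r < min (((1:ℝ)/5) ^ (-(1:ℝ)/4) * ((3:ℝ)/7) ^ (-(3:ℝ)/4)) (Real.sqrt 6))
    (hγ : γ ≤ 3 * (2*ν - α - (1/3)*(r*α + r^2*ν)) / (r + 3)) :
    ∃ C > (0:ℝ), ∀ t ≥ (0:ℝ),
      ν * L2sq (dx y t) + (δ/2) * L4q (y t)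
        + Real.exp (-2*γ*t)
          * (∫ s in (0:ℝ)..t, Real.exp (2*γ*s) * (L2sq (dt1 y s) + r * (xInner (dt1 y s))^2))
      ≤ C * Real.exp (-2*γ*t) * HkSq 1 (y 0) := by
  -- §0 arithmetic consequences of the hypotheses
  have hr3 : (0:ℝ) < r + 3 := by linarith
  have hr6 : r^2 < 6 := by
    have h1 : r < Real.sqrt 6 := lt_of_lt_of_le hcond2 (min_le_right _ _)
    nlinarith [(Real.lt_sqrt hr0.le).mp h1]
  have hμ : γ * (r+3) / 3 ≤ 2*ν - α - (1/3)*(r*α + r^2*ν) := by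
    rw [le_div_iff₀ hr3] at hγ
    nlinarith [hγ]
  have hμpos : 0 < 2*ν - α - (1/3)*(r*α + r^2*ν) :=
    lt_of_lt_of_le (by positivity) hμ
  -- §1 smoothness and continuity package
  have hyc : Continuous (Function.uncurry y) := hsmooth.continuous
  have hYxu : ContDiff ℝ (⊤ : ℕ∞) (Function.uncurry (fun t x => dx y t x)) := contDiff_px hsmooth
  have hYtu : ContDiff ℝ (⊤ : ℕ∞) (Function.uncurry (fun t x => dt1 y t x)) := contDiff_pt hsmooth
  have hYxc : Continuous (Function.uncurry (fun t x => dx y t x)) := hYxu.continuous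
  have hYtc : Continuous (Function.uncurry (fun t x => dt1 y t x)) := hYtu.continuous
  have hYxxc : Continuous (Function.uncurry (fun t x => deriv (dx y t) x)) :=
    (contDiff_px hYxu).continuous
  have hYxtc : Continuous (Function.uncurry (fun t x => dxt y t x)) :=
    (contDiff_px hYtu).continuous
  have hYttc : Continuous (Function.uncurry (fun t x => deriv (fun s => dt1 y s x) t)) :=
    (contDiff_pt hYtu).continuous
  have yS : ∀ t, Continuous (y t) :=
    fun t => hyc.comp (continuous_const.prodMk continuous_id)
  have YxS : ∀ t, Continuous (dx y t) :=
    fun t => hYxc.comp (continuous_const.prodMk continuous_id)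
  have YtS : ∀ t, Continuous (dt1 y t) :=
    fun t => hYtc.comp (continuous_const.prodMk continuous_id)
  have YxxS : ∀ t, Continuous (fun x => deriv (dx y t) x) :=
    fun t => hYxxc.comp (continuous_const.prodMk continuous_id)
  have YxtS : ∀ t, Continuous (dxt y t) :=
    fun t => hYxtc.comp (continuous_const.prodMk continuous_id)
  -- pointwise derivatives
  have hyx : ∀ t x, HasDerivAt (y t) (dx y t x) x :=
    fun t x => (hasDerivAt_x hsmooth t x).differentiableAt.hasDerivAt
  have hyt : ∀ t x, HasDerivAt (fun s => y s x) (dt1 y t x) t :=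
    fun t x => (hasDerivAt_t hsmooth t x).differentiableAt.hasDerivAt
  have hYxx : ∀ t x, HasDerivAt (dx y t) (deriv (dx y t) x) x :=
    fun t x => (hasDerivAt_x hYxu t x).differentiableAt.hasDerivAt
  have hYtx : ∀ t x, HasDerivAt (dt1 y t) (dxt y t x) x :=
    fun t x => (hasDerivAt_x hYtu t x).differentiableAt.hasDerivAt
  have hYtt : ∀ t x, HasDerivAt (fun s => dt1 y s x) (deriv (fun s => dt1 y s x) t) t :=
    fun t x => (hasDerivAt_t hYtu t x).differentiableAt.hasDerivAt
  have hYxt : ∀ t x, HasDerivAt (fun s => dx y s x) (dxt y t x) t := by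
    intro t x
    have h := (hasDerivAt_t hYxu t x).differentiableAt.hasDerivAt
    have e : deriv (fun s => dx y s x) t = dxt y t x := mixed_symm hsmooth t x
    exact e ▸ h
  -- §2 derivatives of the functionals
  have hda : ∀ t, HasDerivAt (fun s => L2sq (y s))
      (2 * ∫ x in (0:ℝ)..1, y t x * dt1 y t x) t := by
    intro t
    have h := hasDerivAt_integ (F := fun s x => (y s x)^2)
      (F' := fun s x => 2*(y s x * dt1 y s x))
      ((hyc.pow 2) |>.congr (fun p => rfl)) ((continuous_const.mul (hyc.mul hYtc)) |>.congr (fun p => rfl))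
      (fun s x => hasDerivAt_sq (hyt s x)) t
    rwa [intervalIntegral.integral_const_mul] at h
  have hdb : ∀ t, HasDerivAt (fun s => L2sq (dx y s))
      (2 * ∫ x in (0:ℝ)..1, dx y t x * dxt y t x) t := by
    intro t
    have h := hasDerivAt_integ (F := fun s x => (dx y s x)^2)
      (F' := fun s x => 2*(dx y s x * dxt y s x))
      ((hYxc.pow 2) |>.congr (fun p => rfl)) ((continuous_const.mul (hYxc.mul hYxtc)) |>.congr (fun p => rfl))
      (fun s x => hasDerivAt_sq (hYxt s x)) t
    rwa [intervalIntegral.integral_const_mul] at h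
  have hdq : ∀ t, HasDerivAt (fun s => L4q (y s))
      (4 * ∫ x in (0:ℝ)..1, (y t x)^3 * dt1 y t x) t := by
    intro t
    have h := hasDerivAt_integ (F := fun s x => (y s x)^4)
      (F' := fun s x => 4*((y s x)^3 * dt1 y s x))
      ((hyc.pow 4) |>.congr (fun p => rfl)) ((continuous_const.mul ((hyc.pow 3).mul hYtc)) |>.congr (fun p => rfl))
      (fun s x => hasDerivAt_pow4 (hyt s x)) t
    rwa [intervalIntegral.integral_const_mul] at h
  have hdI : ∀ t, HasDerivAt (fun s => xInner (y s)) (xInner (dt1 y t)) t := by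
    intro t
    exact hasDerivAt_integ (F := fun s x => x * y s x)
      (F' := fun s x => x * dt1 y s x)
      (continuous_snd.mul hyc) (continuous_snd.mul hYtc)
      (fun s x => (hyt s x).const_mul x) t
  have hdD : ∀ t, HasDerivAt (fun s => L2sq (dt1 y s))
      (2 * ∫ x in (0:ℝ)..1, dt1 y t x * deriv (fun s => dt1 y s x) t) t := by
    intro t
    have h := hasDerivAt_integ (F := fun s x => (dt1 y s x)^2)
      (F' := fun s x => 2*(dt1 y s x * deriv (fun τ => dt1 y τ x) s))
      ((hYtc.pow 2) |>.congr (fun p => rfl)) ((continuous_const.mul (hYtc.mul hYttc)) |>.congr (fun p => rfl))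
      (fun s x => hasDerivAt_sq (hYtt s x)) t
    rwa [intervalIntegral.integral_const_mul] at h
  have hdJ : ∀ t, HasDerivAt (fun s => xInner (dt1 y s))
      (∫ x in (0:ℝ)..1, x * deriv (fun s => dt1 y s x) t) t := by
    intro t
    exact hasDerivAt_integ (F := fun s x => x * dt1 y s x)
      (F' := fun s x => x * deriv (fun τ => dt1 y τ x) s)
      (continuous_snd.mul hYtc) (continuous_snd.mul hYttc)
      (fun s x => (hYtt s x).const_mul x) t
  -- continuity of the functionals
  have haC : Continuous (fun s => L2sq (y s)) := by
    have hdiff : Differentiable ℝ (fun s => L2sq (y s)) := fun t => (hda t).differentiableAt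
    exact hdiff.continuous
  have hbC : Continuous (fun s => L2sq (dx y s)) := by
    have hdiff : Differentiable ℝ (fun s => L2sq (dx y s)) := fun t => (hdb t).differentiableAt
    exact hdiff.continuous
  have hqC : Continuous (fun s => L4q (y s)) := by
    have hdiff : Differentiable ℝ (fun s => L4q (y s)) := fun t => (hdq t).differentiableAt
    exact hdiff.continuous
  have hIC : Continuous (fun s => xInner (y s)) := by
    have hdiff : Differentiable ℝ (fun s => xInner (y s)) := fun t => (hdI t).differentiableAt
    exact hdiff.continuous
  have hDC : Continuous (fun s => L2sq (dt1 y s)) := by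
    have hdiff : Differentiable ℝ (fun s => L2sq (dt1 y s)) := fun t => (hdD t).differentiableAt
    exact hdiff.continuous
  have hJC : Continuous (fun s => xInner (dt1 y s)) := by
    have hdiff : Differentiable ℝ (fun s => xInner (dt1 y s)) := fun t => (hdJ t).differentiableAt
    exact hdiff.continuous
  -- §3 boundary identities
  have hYt_0 : ∀ t > (0:ℝ), dt1 y t 0 = 0 := by
    intro t ht
    have hev : (fun s => y s 0) =ᶠ[nhds t] (fun _ => (0:ℝ)) := by
      filter_upwards [isOpen_Ioi.mem_nhds ht] with s hs
      exact hbc0 s (le_of_lt hs)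
    show deriv (fun s => y s 0) t = 0
    rw [hev.deriv_eq]
    exact deriv_const t 0
  have hYt_1 : ∀ t > (0:ℝ), dt1 y t 1 = -r * xInner (dt1 y t) := by
    intro t ht
    have hev : (fun s => y s 1) =ᶠ[nhds t] (fun s => -r * xInner (y s)) := by
      filter_upwards [isOpen_Ioi.mem_nhds ht] with s hs
      exact hbc1 s hs
    show deriv (fun s => y s 1) t = -r * xInner (dt1 y t)
    rw [hev.deriv_eq]
    exact ((hdI t).const_mul (-r)).deriv
  -- §4 the PDE integrated against a continuous weight
  have hkey : ∀ t > (0:ℝ), ∀ h : ℝ → ℝ, Continuous h →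
      (∫ x in (0:ℝ)..1, h x * dt1 y t x)
        = ν * (∫ x in (0:ℝ)..1, h x * deriv (dx y t) x)
          + α * (∫ x in (0:ℝ)..1, h x * y t x)
          - δ * (∫ x in (0:ℝ)..1, h x * (y t x)^3) := by
    intro t ht h hh
    have hne : ∀ᵐ (x : ℝ), x ≠ (1:ℝ) := by
      rw [ae_iff]
      simpa [not_not, Set.setOf_eq_eq_singleton] using measure_singleton (1:ℝ)
    have hcongr : (∫ x in (0:ℝ)..1, h x * dt1 y t x)
        = ∫ x in (0:ℝ)..1,
            (ν * (h x * deriv (dx y t) x) + α * (h x * y t x) - δ * (h x * (y t x)^3)) := by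
      apply intervalIntegral.integral_congr_ae
      filter_upwards [hne] with x hx1 hmem
      rw [uIoc_of_le (by norm_num : (0:ℝ) ≤ 1)] at hmem
      have hxIoo : x ∈ Set.Ioo (0:ℝ) 1 := ⟨hmem.1, lt_of_le_of_ne hmem.2 hx1⟩
      have hp := hpde t ht x hxIoo
      have hdxx2 : dxx y t x = deriv (dx y t) x := by
        show iteratedDeriv 2 (y t) x = _
        rw [iteratedDeriv_succ, iteratedDeriv_one]
        rfl
      rw [hdxx2] at hp
      rw [hp]; ring
    rw [hcongr, intervalIntegral.integral_sub, intervalIntegral.integral_add,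
      intervalIntegral.integral_const_mul, intervalIntegral.integral_const_mul,
      intervalIntegral.integral_const_mul]
    · exact ((hh.mul (YxxS t)).intervalIntegrable 0 1).const_mul ν
    · exact ((hh.mul (yS t)).intervalIntegrable 0 1).const_mul α
    · exact (((hh.mul (YxxS t)).intervalIntegrable 0 1).const_mul ν).add
        (((hh.mul (yS t)).intervalIntegrable 0 1).const_mul α)
    · exact ((hh.mul ((yS t).pow 3)).intervalIntegrable 0 1).const_mul δ
  
  -- §5 integration by parts identities
  have hflip : ∀ (f g : ℝ → ℝ), (∫ x in (0:ℝ)..1, f x * g x) = ∫ x in (0:ℝ)..1, g x * f x := by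
    intro f g
    apply intervalIntegral.integral_congr
    intro s _
    exact mul_comm _ _
  have hsqint : ∀ (f : ℝ → ℝ),
      (∫ x in (0:ℝ)..1, f x * f x) = ∫ x in (0:ℝ)..1, (f x)^2 := by
    intro f
    apply intervalIntegral.integral_congr
    intro s _
    ring
  have hcubint : ∀ (f : ℝ → ℝ),
      (∫ x in (0:ℝ)..1, f x * (f x)^3) = ∫ x in (0:ℝ)..1, (f x)^4 := by
    intro f
    apply intervalIntegral.integral_congr
    intro s _
    ring
  have hibp1 : ∀ t, (∫ x in (0:ℝ)..1, y t x * deriv (dx y t) x)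
      = y t 1 * dx y t 1 - y t 0 * dx y t 0 - L2sq (dx y t) := by
    intro t
    have key := intervalIntegral.integral_deriv_mul_eq_sub
      (u := y t) (v := dx y t) (u' := dx y t) (v' := fun x => deriv (dx y t) x)
      (fun x _ => hyx t x) (fun x _ => hYxx t x)
      ((YxS t).intervalIntegrable 0 1) ((YxxS t).intervalIntegrable 0 1)
    have hsplit : (∫ x in (0:ℝ)..1, (dx y t x * dx y t x + y t x * deriv (dx y t) x))
        = L2sq (dx y t) + ∫ x in (0:ℝ)..1, y t x * deriv (dx y t) x := by
      rw [intervalIntegral.integral_add (f := fun x => dx y t x * dx y t x)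
        (g := fun x => y t x * deriv (dx y t) x) (((YxS t).mul (YxS t)).intervalIntegrable 0 1)
        (((yS t).mul (YxxS t)).intervalIntegrable 0 1)]
      congr 1
      exact hsqint (dx y t)
    rw [hsplit] at key
    linarith [key]
  have hftc : ∀ t, (∫ x in (0:ℝ)..1, dx y t x) = y t 1 - y t 0 := by
    intro t
    exact intervalIntegral.integral_eq_sub_of_hasDerivAt (fun x _ => hyx t x)
      ((YxS t).intervalIntegrable 0 1)
  have hibp2 : ∀ t, (∫ x in (0:ℝ)..1, x * deriv (dx y t) x)
      = dx y t 1 - (y t 1 - y t 0) := by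
    intro t
    have key := intervalIntegral.integral_deriv_mul_eq_sub
      (u := fun x : ℝ => x) (v := dx y t) (u' := fun _ => (1:ℝ))
      (v' := fun x => deriv (dx y t) x)
      (fun x _ => hasDerivAt_id x) (fun x _ => hYxx t x)
      (continuous_const.intervalIntegrable 0 1) ((YxxS t).intervalIntegrable 0 1)
    have hi1 : IntervalIntegrable (fun x => (1:ℝ) * dx y t x) volume 0 1 :=
      (continuous_const.mul (YxS t)).intervalIntegrable 0 1
    have hi2 : IntervalIntegrable (fun x : ℝ => x * deriv (dx y t) x) volume 0 1 :=
      (continuous_id.mul (YxxS t)).intervalIntegrable 0 1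
    have hsplit : (∫ x in (0:ℝ)..1, ((1:ℝ) * dx y t x + x * deriv (dx y t) x))
        = (∫ x in (0:ℝ)..1, dx y t x) + ∫ x in (0:ℝ)..1, x * deriv (dx y t) x := by
      rw [intervalIntegral.integral_add hi1 hi2]
      congr 1
      apply intervalIntegral.integral_congr
      intro s _
      exact one_mul _
    rw [hsplit, hftc t] at key
    norm_num at key
    linarith [key]
  have hibp3 : ∀ t, (∫ x in (0:ℝ)..1, dt1 y t x * deriv (dx y t) x)
      = dt1 y t 1 * dx y t 1 - dt1 y t 0 * dx y t 0
        - ∫ x in (0:ℝ)..1, dx y t x * dxt y t x := by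
    intro t
    have key := intervalIntegral.integral_deriv_mul_eq_sub
      (u := dt1 y t) (v := dx y t) (u' := dxt y t) (v' := fun x => deriv (dx y t) x)
      (fun x _ => hYtx t x) (fun x _ => hYxx t x)
      ((YxtS t).intervalIntegrable 0 1) ((YxxS t).intervalIntegrable 0 1)
    have hsplit : (∫ x in (0:ℝ)..1, (dxt y t x * dx y t x + dt1 y t x * deriv (dx y t) x))
        = (∫ x in (0:ℝ)..1, dx y t x * dxt y t x)
          + ∫ x in (0:ℝ)..1, dt1 y t x * deriv (dx y t) x := by
      rw [intervalIntegral.integral_add (f := fun x => dxt y t x * dx y t x)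
        (g := fun x => dt1 y t x * deriv (dx y t) x) (((YxtS t).mul (YxS t)).intervalIntegrable 0 1)
        (((YtS t).mul (YxxS t)).intervalIntegrable 0 1)]
      congr 1
      exact hflip (dxt y t) (dx y t)
    rw [hsplit] at key
    linarith [key]
  -- §6 exact energy identities for t > 0
  have idJ : ∀ t > (0:ℝ), xInner (dt1 y t)
      = ν * (dx y t 1 - y t 1) + α * xInner (y t)
        - δ * xInner (fun x => (y t x)^3) := by
    intro t ht
    have k2 := hkey t ht (fun x : ℝ => x) continuous_id
    beta_reduce at k2
    have e0 : y t 0 = 0 := hbc0 t (le_of_lt ht)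
    rw [hibp2 t, e0] at k2
    have eL : (∫ x in (0:ℝ)..1, x * dt1 y t x) = xInner (dt1 y t) := rfl
    have eI : (∫ x in (0:ℝ)..1, x * y t x) = xInner (y t) := rfl
    have eP : (∫ x in (0:ℝ)..1, x * (y t x)^3) = xInner (fun x => (y t x)^3) := rfl
    rw [eL, eI, eP] at k2
    rw [k2]
    ring
  have idSy : ∀ t > (0:ℝ), (∫ x in (0:ℝ)..1, y t x * dt1 y t x)
      = ν * (y t 1 * dx y t 1) - ν * L2sq (dx y t) + α * L2sq (y t) - δ * L4q (y t) := by
    intro t ht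
    have k1 := hkey t ht (y t) (yS t)
    have e0 : y t 0 = 0 := hbc0 t (le_of_lt ht)
    rw [hibp1 t, e0, hsqint (y t), hcubint (y t)] at k1
    have ea : (∫ x in (0:ℝ)..1, (y t x)^2) = L2sq (y t) := rfl
    have eq4 : (∫ x in (0:ℝ)..1, (y t x)^4) = L4q (y t) := rfl
    rw [ea, eq4] at k1
    rw [k1]
    ring
  have idSX : ∀ t > (0:ℝ), ν * (∫ x in (0:ℝ)..1, dx y t x * dxt y t x)
      = ν * (dt1 y t 1 * dx y t 1) - L2sq (dt1 y t)
        + α * (∫ x in (0:ℝ)..1, y t x * dt1 y t x)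
        - δ * (∫ x in (0:ℝ)..1, (y t x)^3 * dt1 y t x) := by
    intro t ht
    have k3 := hkey t ht (dt1 y t) (YtS t)
    rw [hsqint (dt1 y t)] at k3
    have eD : (∫ x in (0:ℝ)..1, (dt1 y t x)^2) = L2sq (dt1 y t) := rfl
    rw [eD] at k3
    rw [hflip (dt1 y t) (y t), hflip (dt1 y t) (fun x => (y t x)^3)] at k3
    have h0 : dt1 y t 0 = 0 := hYt_0 t ht
    have h3 := hibp3 t
    rw [h0] at h3
    -- k3 : D = ν * (∫ dt1*deriv(dx)) + α * Sy - δ * Sq'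
    -- h3 : ∫ dt1*deriv(dx) = dt1 1 * dx 1 - 0 - ∫ dx*dxt
    rw [h3] at k3
    linarith [k3]
  
  -- §7 pointwise quantitative bounds
  have ha0 : ∀ t, 0 ≤ L2sq (y t) := fun t => integ_nonneg01 (fun s _ => sq_nonneg _)
  have hb0 : ∀ t, 0 ≤ L2sq (dx y t) := fun t => integ_nonneg01 (fun s _ => sq_nonneg _)
  have hq0 : ∀ t, 0 ≤ L4q (y t) := fun t => integ_nonneg01 (fun s _ => by positivity)
  have hD0 : ∀ t, 0 ≤ L2sq (dt1 y t) := fun t => integ_nonneg01 (fun s _ => sq_nonneg _)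
  have hPoin : ∀ t ≥ (0:ℝ), L2sq (y t) ≤ (9/20) * L2sq (dx y t) :=
    fun t ht => poincare (hyx t) (YxS t) (hbc0 t ht)
  have hIsq : ∀ t, (xInner (y t))^2 ≤ (1/3) * L2sq (y t) := fun t => xInner_sq_le (yS t)
  have hJsq : ∀ t, (xInner (dt1 y t))^2 ≤ (1/3) * L2sq (dt1 y t) :=
    fun t => xInner_sq_le (YtS t)
  have hI4 : ∀ t, (xInner (y t))^4 ≤ (1/12) * L4q (y t) := fun t => xInner_quart_le (yS t)
  have hP4 : ∀ t, (xInner (fun x => (y t x)^3))^4 ≤ (1/5) * (L4q (y t))^3 :=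
    fun t => xInner_cube_quart_le (yS t)
  have hPsq : ∀ t, (xInner (fun x => (y t x)^3))^2 ≤ L2sq (y t) * L4q (y t) :=
    fun t => xInner_cube_sq_le (yS t)
  -- the crucial quartic bound  -r*(I*P) ≤ (9/10) q
  have hIP : ∀ t, -(r * (xInner (y t) * xInner (fun x => (y t x)^3))) ≤ (9/10) * L4q (y t) := by
    intro t
    set II := xInner (y t)
    set PP := xInner (fun x => (y t x)^3)
    set qq := L4q (y t)
    have hqt : 0 ≤ qq := hq0 t
    have h1 : II^4 * PP^4 ≤ ((1/12) * qq) * ((1/5) * qq^3) :=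
      mul_le_mul (hI4 t) (hP4 t) (by positivity) (by positivity)
    have h2 : r^4 ≤ 36 := by nlinarith [hr6, sq_nonneg r, sq_nonneg (r^2)]
    have h4 : (r * (II * PP))^4 ≤ (3/5) * qq^4 := by
      have e : (r * (II * PP))^4 = r^4 * (II^4 * PP^4) := by ring
      rw [e]
      calc r^4 * (II^4 * PP^4) ≤ 36 * ((1/12) * qq * ((1/5) * qq^3)) :=
            mul_le_mul h2 h1 (by positivity) (by norm_num)
        _ = (3/5) * qq^4 := by ring
    exact neg_le_of_quart hqt h4
  -- §8 Lyapunov inequality for V = a + r I²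
  have hVineq : ∀ t > (0:ℝ),
      (∫ x in (0:ℝ)..1, y t x * dt1 y t x) + r * (xInner (y t) * xInner (dt1 y t))
        ≤ -γ * (L2sq (y t) + r * (xInner (y t))^2)
          - (ν/10) * L2sq (dx y t) - (δ/10) * L4q (y t) := by
    intro t ht
    have e1 : y t 1 = -r * xInner (y t) := hbc1 t ht
    have e2 := idJ t ht
    have e3 := idSy t ht
    rw [e1] at e2 e3
    have hfact : (∫ x in (0:ℝ)..1, y t x * dt1 y t x)
        + r * (xInner (y t) * xInner (dt1 y t))
        = -ν * L2sq (dx y t) + α * L2sq (y t) - δ * L4q (y t)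
          + (r*α + ν*r^2) * (xInner (y t))^2
          - r * δ * (xInner (y t) * xInner (fun x => (y t x)^3)) := by
      linear_combination e3 + (r * xInner (y t)) * e2
    rw [hfact]
    have hIPt := hIP t
    have hPoint := hPoin t (le_of_lt ht)
    have hIsqt := hIsq t
    have hat := ha0 t
    have hcoefnn : (0:ℝ) ≤ r*α + r^2*ν + γ*r := by positivity
    have hIabs := mul_le_mul_of_nonneg_left hIsqt hcoefnn
    have haμ := mul_nonneg (sub_nonneg.mpr hμ) hat
    nlinarith [hIPt, hPoint, hIabs, haμ, hat, hb0 t, hq0 t, hδ.le, hν.le]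
  -- §9 first Gronwall argument
  obtain ⟨Vf, hVfdef⟩ : ∃ Vf : ℝ → ℝ, Vf = fun s => L2sq (y s) + r * (xInner (y s))^2 :=
    ⟨_, rfl⟩
  have hVfnn : ∀ t, 0 ≤ Vf t := by
    intro t
    have := ha0 t
    have h2 : 0 ≤ r * (xInner (y t))^2 := by positivity
    simp only [hVfdef]
    linarith
  have hVfd : ∀ t, HasDerivAt Vf
      ((2 * ∫ x in (0:ℝ)..1, y t x * dt1 y t x)
        + r * (2 * (xInner (y t) * xInner (dt1 y t)))) t := by
    intro t
    rw [hVfdef]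
    exact (hda t).add ((hasDerivAt_sq (hdI t)).const_mul r)
  have hGint : Continuous (fun s => Real.exp (2*γ*s)
      * ((ν/5) * L2sq (dx y s) + (δ/5) * L4q (y s))) := by
    apply Continuous.mul
    · exact Real.continuous_exp.comp (continuous_const.mul continuous_id)
    · exact (continuous_const.mul hbC).add (continuous_const.mul hqC)
  obtain ⟨V1, hV1def⟩ : ∃ V1 : ℝ → ℝ, V1 = fun t => Real.exp (2*γ*t) * Vf t
      + ∫ s in (0:ℝ)..t, Real.exp (2*γ*s)
          * ((ν/5) * L2sq (dx y s) + (δ/5) * L4q (y s)) := ⟨_, rfl⟩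
  have hV1d : ∀ t, HasDerivAt V1
      ((2*γ * Real.exp (2*γ*t)) * Vf t
        + Real.exp (2*γ*t) * ((2 * ∫ x in (0:ℝ)..1, y t x * dt1 y t x)
            + r * (2 * (xInner (y t) * xInner (dt1 y t))))
        + Real.exp (2*γ*t) * ((ν/5) * L2sq (dx y t) + (δ/5) * L4q (y t))) t := by
    intro t
    rw [hV1def]
    exact ((hasDerivAt_exp2 (2*γ) t).mul (hVfd t)).add (hasDerivAt_cumul hGint t)
  have hV1mono : ∀ t ≥ (0:ℝ), V1 t ≤ V1 0 := by
    apply le_initial hV1d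
    intro t ht
    have h := hVineq t ht
    have he : (0:ℝ) < Real.exp (2*γ*t) := Real.exp_pos _
    have h2 := mul_le_mul_of_nonneg_left h he.le
    simp only [hVfdef]
    nlinarith [h2]
  have hV10 : V1 0 = Vf 0 := by
    rw [hV1def]
    simp [Real.exp_zero, intervalIntegral.integral_same]
  -- extraction of the three consequences
  have hsplitint : ∀ t, (∫ s in (0:ℝ)..t, Real.exp (2*γ*s)
      * ((ν/5) * L2sq (dx y s) + (δ/5) * L4q (y s)))
      = (ν/5) * (∫ s in (0:ℝ)..t, Real.exp (2*γ*s) * L2sq (dx y s))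
        + (δ/5) * (∫ s in (0:ℝ)..t, Real.exp (2*γ*s) * L4q (y s)) := by
    intro t
    have e : (fun s => Real.exp (2*γ*s) * ((ν/5) * L2sq (dx y s) + (δ/5) * L4q (y s)))
        = fun s => (ν/5) * (Real.exp (2*γ*s) * L2sq (dx y s))
          + (δ/5) * (Real.exp (2*γ*s) * L4q (y s)) := by
      funext s
      ring
    rw [e, intervalIntegral.integral_add, intervalIntegral.integral_const_mul,
      intervalIntegral.integral_const_mul]
    · exact (continuous_const.mul ((Real.continuous_exp.comp
        (continuous_const.mul continuous_id)).mul hbC)).intervalIntegrable 0 t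
    · exact (continuous_const.mul ((Real.continuous_exp.comp
        (continuous_const.mul continuous_id)).mul hqC)).intervalIntegrable 0 t
  have hbintnn : ∀ t ≥ (0:ℝ), 0 ≤ ∫ s in (0:ℝ)..t, Real.exp (2*γ*s) * L2sq (dx y s) :=
    fun t ht => intervalIntegral.integral_nonneg ht
      (fun s _ => mul_nonneg (Real.exp_pos _).le (hb0 s))
  have hqintnn : ∀ t ≥ (0:ℝ), 0 ≤ ∫ s in (0:ℝ)..t, Real.exp (2*γ*s) * L4q (y s) :=
    fun t ht => intervalIntegral.integral_nonneg ht
      (fun s _ => mul_nonneg (Real.exp_pos _).le (hq0 s))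
  have hVpt : ∀ t ≥ (0:ℝ), Real.exp (2*γ*t) * Vf t ≤ Vf 0 := by
    intro t ht
    have h := hV1mono t ht
    rw [hV10] at h
    simp only [hV1def] at h
    rw [hsplitint t] at h
    have h1 : 0 ≤ (ν/5) * ∫ s in (0:ℝ)..t, Real.exp (2*γ*s) * L2sq (dx y s) :=
      mul_nonneg (by positivity) (hbintnn t ht)
    have h2 : 0 ≤ (δ/5) * ∫ s in (0:ℝ)..t, Real.exp (2*γ*s) * L4q (y s) :=
      mul_nonneg (by positivity) (hqintnn t ht)
    linarith [h, h1, h2]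
  have hbint : ∀ t ≥ (0:ℝ),
      (∫ s in (0:ℝ)..t, Real.exp (2*γ*s) * L2sq (dx y s)) ≤ (5/ν) * Vf 0 := by
    intro t ht
    have h := hV1mono t ht
    rw [hV10] at h
    simp only [hV1def] at h
    rw [hsplitint t] at h
    have h2 : 0 ≤ (δ/5) * ∫ s in (0:ℝ)..t, Real.exp (2*γ*s) * L4q (y s) :=
      mul_nonneg (by positivity) (hqintnn t ht)
    have h3 : 0 ≤ Real.exp (2*γ*t) * Vf t := mul_nonneg (Real.exp_pos _).le (hVfnn t)
    have h4 : (ν/5) * (∫ s in (0:ℝ)..t, Real.exp (2*γ*s) * L2sq (dx y s)) ≤ Vf 0 := by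
      linarith [h, h2, h3]
    calc (∫ s in (0:ℝ)..t, Real.exp (2*γ*s) * L2sq (dx y s))
        = (5/ν) * ((ν/5) * ∫ s in (0:ℝ)..t, Real.exp (2*γ*s) * L2sq (dx y s)) := by
          field_simp
      _ ≤ (5/ν) * Vf 0 := mul_le_mul_of_nonneg_left h4 (by positivity)
  have hqint : ∀ t ≥ (0:ℝ),
      (∫ s in (0:ℝ)..t, Real.exp (2*γ*s) * L4q (y s)) ≤ (5/δ) * Vf 0 := by
    intro t ht
    have h := hV1mono t ht
    rw [hV10] at h
    simp only [hV1def] at h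
    rw [hsplitint t] at h
    have h2 : 0 ≤ (ν/5) * ∫ s in (0:ℝ)..t, Real.exp (2*γ*s) * L2sq (dx y s) :=
      mul_nonneg (by positivity) (hbintnn t ht)
    have h3 : 0 ≤ Real.exp (2*γ*t) * Vf t := mul_nonneg (Real.exp_pos _).le (hVfnn t)
    have h4 : (δ/5) * (∫ s in (0:ℝ)..t, Real.exp (2*γ*s) * L4q (y s)) ≤ Vf 0 := by
      linarith [h, h2, h3]
    calc (∫ s in (0:ℝ)..t, Real.exp (2*γ*s) * L4q (y s))
        = (5/δ) * ((δ/5) * ∫ s in (0:ℝ)..t, Real.exp (2*γ*s) * L4q (y s)) := by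
          field_simp
      _ ≤ (5/δ) * Vf 0 := mul_le_mul_of_nonneg_left h4 (by positivity)
  have haVbound : ∀ t ≥ (0:ℝ), L2sq (y t) ≤ Vf 0 := by
    intro t ht
    have h1 : Vf t ≤ Real.exp (2*γ*t) * Vf t := by
      have he : (1:ℝ) ≤ Real.exp (2*γ*t) := by
        rw [show (1:ℝ) = Real.exp 0 from (Real.exp_zero).symm]
        apply Real.exp_le_exp.mpr
        positivity
      nlinarith [hVfnn t, he]
    have h2 := hVpt t ht
    have h3 : L2sq (y t) ≤ Vf t := by
      simp only [hVfdef]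
      nlinarith [sq_nonneg (xInner (y t)), hr0.le]
    linarith
  
  -- §10 second energy identity
  have idB : ∀ t > (0:ℝ),
      ν * (∫ x in (0:ℝ)..1, dx y t x * dxt y t x)
        + δ * (∫ x in (0:ℝ)..1, (y t x)^3 * dt1 y t x)
        - α * (∫ x in (0:ℝ)..1, y t x * dt1 y t x)
        - (r*α + ν*r^2) * (xInner (y t) * xInner (dt1 y t))
      = - L2sq (dt1 y t) - r * (xInner (dt1 y t))^2
        - r * δ * (xInner (dt1 y t) * xInner (fun x => (y t x)^3)) := by
    intro t ht
    have e1 : y t 1 = -r * xInner (y t) := hbc1 t ht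
    have e2 := idJ t ht
    have e4 : dt1 y t 1 = -r * xInner (dt1 y t) := hYt_1 t ht
    have e5 := idSX t ht
    rw [e1] at e2
    rw [e4] at e5
    linear_combination e5 + (r * xInner (dt1 y t)) * e2
  -- §11 the H¹ Lyapunov functional Φ
  obtain ⟨Phi, hPhidef⟩ : ∃ Phi : ℝ → ℝ, Phi = fun t =>
      ν * L2sq (dx y t) + (δ/2) * L4q (y t)
        - α * L2sq (y t) - (r*α + ν*r^2) * (xInner (y t))^2 := ⟨_, rfl⟩
  have hPhid : ∀ t, HasDerivAt Phi
      (ν * (2 * ∫ x in (0:ℝ)..1, dx y t x * dxt y t x)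
        + (δ/2) * (4 * ∫ x in (0:ℝ)..1, (y t x)^3 * dt1 y t x)
        - α * (2 * ∫ x in (0:ℝ)..1, y t x * dt1 y t x)
        - (r*α + ν*r^2) * (2 * (xInner (y t) * xInner (dt1 y t)))) t := by
    intro t
    rw [hPhidef]
    exact ((((hdb t).const_mul ν).add ((hdq t).const_mul (δ/2))).sub
      ((hda t).const_mul α)).sub ((hasDerivAt_sq (hdI t)).const_mul (r*α + ν*r^2))
  have hθnum : 0 < 6*ν - (3*α + r*α + r^2*ν) := by nlinarith [hμpos]
  have hco : ∀ t ≥ (0:ℝ),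
      (6*ν - (3*α + r*α + r^2*ν)) * (ν * L2sq (dx y t) + (δ/2) * L4q (y t))
        ≤ (6*ν) * Phi t := by
    intro t ht
    rw [hPhidef]
    have h1 := mul_le_mul_of_nonneg_left (hIsq t)
      (show (0:ℝ) ≤ 6*ν*(r*α + ν*r^2) by positivity)
    have h2 := mul_le_mul_of_nonneg_left (hPoin t ht)
      (show (0:ℝ) ≤ 2*ν*(3*α + r*α + r^2*ν) by positivity)
    have h3 : 0 ≤ ν*(3*α + r*α + r^2*ν)*L2sq (dx y t) :=
      mul_nonneg (by positivity) (hb0 t)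
    have h4 : 0 ≤ (3*α + r*α + r^2*ν)*(δ/2)*L4q (y t) :=
      mul_nonneg (by positivity) (hq0 t)
    nlinarith [h1, h2, h3, h4]
  have hPhinn : ∀ t ≥ (0:ℝ), 0 ≤ Phi t := by
    intro t ht
    have h := hco t ht
    have h2 : 0 ≤ (6*ν - (3*α + r*α + r^2*ν))
        * (ν * L2sq (dx y t) + (δ/2) * L4q (y t)) := by
      apply mul_nonneg hθnum.le
      have := hb0 t; have := hq0 t
      positivity
    nlinarith [h, h2, hν]
  -- §12 differential inequality for Φ
  have hPhiineq : ∀ t > (0:ℝ),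
      (ν * (2 * ∫ x in (0:ℝ)..1, dx y t x * dxt y t x)
        + (δ/2) * (4 * ∫ x in (0:ℝ)..1, (y t x)^3 * dt1 y t x)
        - α * (2 * ∫ x in (0:ℝ)..1, y t x * dt1 y t x)
        - (r*α + ν*r^2) * (2 * (xInner (y t) * xInner (dt1 y t))))
        + 2*γ * Phi t + (L2sq (dt1 y t) + r * (xInner (dt1 y t))^2)
      ≤ ((r^2*δ^2/3) * Vf 0 + γ*δ) * L4q (y t) + (2*γ*ν) * L2sq (dx y t) := by
    intro t ht
    have hB := idB t ht
    have hyoung : -(2 * (r * δ * (xInner (dt1 y t) * xInner (fun x => (y t x)^3))))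
        ≤ 3 * (xInner (dt1 y t))^2
          + (r^2*δ^2/3) * (xInner (fun x => (y t x)^3))^2 := by
      nlinarith [sq_nonneg (3 * xInner (dt1 y t) + r * δ * xInner (fun x => (y t x)^3))]
    have hJD : 3 * (xInner (dt1 y t))^2 ≤ L2sq (dt1 y t) := by
      nlinarith [hJsq t]
    have hPV : (xInner (fun x => (y t x)^3))^2 ≤ Vf 0 * L4q (y t) := by
      calc (xInner (fun x => (y t x)^3))^2 ≤ L2sq (y t) * L4q (y t) := hPsq t
        _ ≤ Vf 0 * L4q (y t) :=
          mul_le_mul_of_nonneg_right (haVbound t (le_of_lt ht)) (hq0 t)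
    have hPhiub : Phi t ≤ ν * L2sq (dx y t) + (δ/2) * L4q (y t) := by
      rw [hPhidef]
      have h1 : 0 ≤ α * L2sq (y t) := mul_nonneg hα.le (ha0 t)
      have h2 : 0 ≤ (r*α + ν*r^2) * (xInner (y t))^2 := by positivity
      linarith
    have hPVc : (r^2*δ^2/3) * (xInner (fun x => (y t x)^3))^2
        ≤ (r^2*δ^2/3) * (Vf 0 * L4q (y t)) :=
      mul_le_mul_of_nonneg_left hPV (by positivity)
    have hγPhi : 2*γ*Phi t ≤ 2*γ*(ν * L2sq (dx y t) + (δ/2) * L4q (y t)) :=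
      mul_le_mul_of_nonneg_left hPhiub (by positivity)
    have hrJ : 0 ≤ r * (xInner (dt1 y t))^2 := by positivity
    nlinarith [hB, hyoung, hJD, hPVc, hγPhi, hrJ, hD0 t]
  -- §13 second Gronwall argument
  have hZc1 : Continuous (fun s => Real.exp (2*γ*s)
      * (L2sq (dt1 y s) + r * (xInner (dt1 y s))^2)) := by
    apply Continuous.mul
    · exact Real.continuous_exp.comp (continuous_const.mul continuous_id)
    · exact hDC.add (continuous_const.mul (hJC.pow 2))
  have hZc2 : Continuous (fun s => Real.exp (2*γ*s)
      * (((r^2*δ^2/3) * Vf 0 + γ*δ) * L4q (y s) + (2*γ*ν) * L2sq (dx y s))) := by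
    apply Continuous.mul
    · exact Real.continuous_exp.comp (continuous_const.mul continuous_id)
    · exact (continuous_const.mul hqC).add (continuous_const.mul hbC)
  obtain ⟨Z, hZdef⟩ : ∃ Z : ℝ → ℝ, Z = fun t => Real.exp (2*γ*t) * Phi t
      + (∫ s in (0:ℝ)..t, Real.exp (2*γ*s)
          * (L2sq (dt1 y s) + r * (xInner (dt1 y s))^2))
      - ∫ s in (0:ℝ)..t, Real.exp (2*γ*s)
          * (((r^2*δ^2/3) * Vf 0 + γ*δ) * L4q (y s) + (2*γ*ν) * L2sq (dx y s)) := ⟨_, rfl⟩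
  have hZd : ∀ t, HasDerivAt Z
      ((2*γ * Real.exp (2*γ*t)) * Phi t
        + Real.exp (2*γ*t) * (ν * (2 * ∫ x in (0:ℝ)..1, dx y t x * dxt y t x)
          + (δ/2) * (4 * ∫ x in (0:ℝ)..1, (y t x)^3 * dt1 y t x)
          - α * (2 * ∫ x in (0:ℝ)..1, y t x * dt1 y t x)
          - (r*α + ν*r^2) * (2 * (xInner (y t) * xInner (dt1 y t))))
        + Real.exp (2*γ*t) * (L2sq (dt1 y t) + r * (xInner (dt1 y t))^2)
        - Real.exp (2*γ*t) * (((r^2*δ^2/3) * Vf 0 + γ*δ) * L4q (y t)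
            + (2*γ*ν) * L2sq (dx y t))) t := by
    intro t
    rw [hZdef]
    exact (((hasDerivAt_exp2 (2*γ) t).mul (hPhid t)).add
      (hasDerivAt_cumul hZc1 t)).sub (hasDerivAt_cumul hZc2 t)
  have hZmono : ∀ t ≥ (0:ℝ), Z t ≤ Z 0 := by
    apply le_initial hZd
    intro t ht
    have h := hPhiineq t ht
    have he : (0:ℝ) < Real.exp (2*γ*t) := Real.exp_pos _
    have h2 := mul_le_mul_of_nonneg_left h he.le
    nlinarith [h2]
  have hZ0 : Z 0 = Phi 0 := by
    rw [hZdef]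
    simp [Real.exp_zero, intervalIntegral.integral_same]
  -- main decay estimate
  have hsplitZ : ∀ t, (∫ s in (0:ℝ)..t, Real.exp (2*γ*s)
      * (((r^2*δ^2/3) * Vf 0 + γ*δ) * L4q (y s) + (2*γ*ν) * L2sq (dx y s)))
      = ((r^2*δ^2/3) * Vf 0 + γ*δ) * (∫ s in (0:ℝ)..t, Real.exp (2*γ*s) * L4q (y s))
        + (2*γ*ν) * (∫ s in (0:ℝ)..t, Real.exp (2*γ*s) * L2sq (dx y s)) := by
    intro t
    have e : (fun s => Real.exp (2*γ*s)
        * (((r^2*δ^2/3) * Vf 0 + γ*δ) * L4q (y s) + (2*γ*ν) * L2sq (dx y s)))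
        = fun s => ((r^2*δ^2/3) * Vf 0 + γ*δ) * (Real.exp (2*γ*s) * L4q (y s))
          + (2*γ*ν) * (Real.exp (2*γ*s) * L2sq (dx y s)) := by
      funext s
      ring
    rw [e, intervalIntegral.integral_add, intervalIntegral.integral_const_mul,
      intervalIntegral.integral_const_mul]
    · exact (continuous_const.mul ((Real.continuous_exp.comp
        (continuous_const.mul continuous_id)).mul hqC)).intervalIntegrable 0 t
    · exact (continuous_const.mul ((Real.continuous_exp.comp
        (continuous_const.mul continuous_id)).mul hbC)).intervalIntegrable 0 t
  have hVf0nn : 0 ≤ Vf 0 := hVfnn 0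
  have hc1nn : (0:ℝ) ≤ (r^2*δ^2/3) * Vf 0 + γ*δ := by positivity
  have hmainZ : ∀ t ≥ (0:ℝ),
      Real.exp (2*γ*t) * Phi t
        + (∫ s in (0:ℝ)..t, Real.exp (2*γ*s)
            * (L2sq (dt1 y s) + r * (xInner (dt1 y s))^2))
      ≤ Phi 0 + (((r^2*δ^2/3) * Vf 0 + γ*δ) * ((5/δ) * Vf 0)
          + (2*γ*ν) * ((5/ν) * Vf 0)) := by
    intro t ht
    have h := hZmono t ht
    rw [hZ0, hZdef] at h
    simp only [] at h
    rw [hsplitZ t] at h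
    have h1 := mul_le_mul_of_nonneg_left (hqint t ht) hc1nn
    have h2 := mul_le_mul_of_nonneg_left (hbint t ht) (show (0:ℝ) ≤ 2*γ*ν by positivity)
    linarith [h, h1, h2]
  
  -- §14 initial data bounds
  have hH : HkSq 1 (y 0) = L2sq (y 0) + L2sq (dx y 0) := by
    show (∑ i ∈ Finset.range 2, ∫ x in (0:ℝ)..1, (iteratedDeriv i (y 0) x)^2) = _
    rw [Finset.sum_range_succ, Finset.sum_range_one, iteratedDeriv_zero, iteratedDeriv_one]
    rfl
  have hH0nn : 0 ≤ L2sq (y 0) + L2sq (dx y 0) := add_nonneg (ha0 0) (hb0 0)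
  have hagmon : L4q (y 0) ≤ L2sq (dx y 0) * L2sq (y 0) := by
    have hb := sq_le_tail (hyx 0) (YxS 0) (hbc0 0 le_rfl)
    have hmono : (∫ x in (0:ℝ)..1, (y 0 x)^4)
        ≤ ∫ x in (0:ℝ)..1, L2sq (dx y 0) * (y 0 x)^2 := by
      apply intervalIntegral.integral_mono_on (by norm_num : (0:ℝ) ≤ 1)
      · exact ((yS 0).pow 4).intervalIntegrable 0 1
      · exact (continuous_const.mul ((yS 0).pow 2)).intervalIntegrable 0 1
      · intro s hs
        have h1 := hb s hs
        have hL : (∫ u in (0:ℝ)..1, (dx y 0 u)^2) = L2sq (dx y 0) := rfl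
        rw [hL] at h1
        nlinarith [mul_le_mul_of_nonneg_right h1 (sq_nonneg (y 0 s))]
    calc L4q (y 0) ≤ ∫ x in (0:ℝ)..1, L2sq (dx y 0) * (y 0 x)^2 := hmono
      _ = L2sq (dx y 0) * L2sq (y 0) := intervalIntegral.integral_const_mul _ _
  have hVf0H : Vf 0 ≤ (1 + r/3) * (L2sq (y 0) + L2sq (dx y 0)) := by
    rw [hVfdef]
    have h1 := hIsq 0
    have h2 := ha0 0
    have h3 := hb0 0
    nlinarith [mul_le_mul_of_nonneg_left h1 hr0.le]
  have hPhi0 : Phi 0 ≤ ν * (L2sq (y 0) + L2sq (dx y 0))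
      + (δ/2) * (L2sq (y 0) + L2sq (dx y 0))^2 := by
    rw [hPhidef]
    have h2 := ha0 0
    have h3 := hb0 0
    have h4 : L4q (y 0) ≤ (L2sq (y 0) + L2sq (dx y 0))^2 := by nlinarith [hagmon]
    have h5 : 0 ≤ α * L2sq (y 0) := mul_nonneg hα.le h2
    have h6 : 0 ≤ (r*α + ν*r^2) * (xInner (y 0))^2 := by positivity
    nlinarith [mul_le_mul_of_nonneg_left h4 (le_of_lt (half_pos hδ))]
  -- §15 choice of the constant and conclusion
  refine ⟨(6*ν/(6*ν - (3*α + r*α + r^2*ν)))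
      * (ν + (δ/2) * (L2sq (y 0) + L2sq (dx y 0))
        + (((r^2*δ^2/3) * Vf 0 + γ*δ) * (5/δ) + (2*γ*ν) * (5/ν)) * (1 + r/3)), ?_, ?_⟩
  · apply mul_pos (div_pos (by positivity) hθnum)
    have h1 : 0 ≤ (δ/2) * (L2sq (y 0) + L2sq (dx y 0)) :=
      mul_nonneg (by positivity) hH0nn
    have h2 : 0 ≤ (((r^2*δ^2/3) * Vf 0 + γ*δ) * (5/δ) + (2*γ*ν) * (5/ν)) * (1 + r/3) := by
      apply mul_nonneg _ (by positivity)
      exact add_nonneg (mul_nonneg hc1nn (by positivity)) (by positivity)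
    linarith [hν]
  · intro t ht
    obtain ⟨N, hN⟩ : ∃ N, N = 6*ν - (3*α + r*α + r^2*ν) := ⟨_, rfl⟩
    obtain ⟨H0, hH0⟩ : ∃ H0, H0 = L2sq (y 0) + L2sq (dx y 0) := ⟨_, rfl⟩
    have hθN : 0 < N := hN ▸ hθnum
    rw [hH, ← hH0, ← hN]
    obtain ⟨K, hK⟩ : ∃ K, K = ν + (δ/2) * H0
        + (((r^2*δ^2/3) * Vf 0 + γ*δ) * (5/δ) + (2*γ*ν) * (5/ν)) * (1 + r/3) := ⟨_, rfl⟩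
    rw [← hK]
    have hH0nn' : 0 ≤ H0 := hH0 ▸ hH0nn
    have hINTnn : 0 ≤ ∫ s in (0:ℝ)..t, Real.exp (2*γ*s)
        * (L2sq (dt1 y s) + r * (xInner (dt1 y s))^2) :=
      intervalIntegral.integral_nonneg ht (fun s _ => mul_nonneg (Real.exp_pos _).le
        (add_nonneg (hD0 s) (mul_nonneg hr0.le (sq_nonneg _))))
    have hstep1 : Phi t + Real.exp (-2*γ*t) * (∫ s in (0:ℝ)..t, Real.exp (2*γ*s)
        * (L2sq (dt1 y s) + r * (xInner (dt1 y s))^2))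
        ≤ Real.exp (-2*γ*t) * (Phi 0 + (((r^2*δ^2/3) * Vf 0 + γ*δ) * ((5/δ) * Vf 0)
          + (2*γ*ν) * ((5/ν) * Vf 0))) := by
      have h' := mul_le_mul_of_nonneg_left (hmainZ t ht) (Real.exp_pos (-2*γ*t)).le
      have hEE : Real.exp (-2*γ*t) * Real.exp (2*γ*t) = 1 := by
        rw [← Real.exp_add]
        norm_num
      have he1 : Real.exp (-2*γ*t) * (Real.exp (2*γ*t) * Phi t
          + (∫ s in (0:ℝ)..t, Real.exp (2*γ*s)
            * (L2sq (dt1 y s) + r * (xInner (dt1 y s))^2)))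
          = Phi t + Real.exp (-2*γ*t) * (∫ s in (0:ℝ)..t, Real.exp (2*γ*s)
            * (L2sq (dt1 y s) + r * (xInner (dt1 y s))^2)) := by
        rw [mul_add, ← mul_assoc, hEE, one_mul]
      rw [he1] at h'
      exact h'
    have hstep2 : ν * L2sq (dx y t) + (δ/2) * L4q (y t) ≤ (6*ν/N) * Phi t := by
      have h := hco t ht
      rw [← hN] at h
      rw [show (6*ν/N) * Phi t = (6*ν*Phi t)/N from by ring, le_div_iff₀ hθN]
      linarith [h]
    have hfrac : (0:ℝ) < 6*ν/N := div_pos (by positivity) hθN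
    have hfac1 : (1:ℝ) ≤ 6*ν/N := by
      rw [le_div_iff₀ hθN, hN]
      nlinarith [hα.le, hr0.le, hν.le]
    have hINT2 : 0 ≤ Real.exp (-2*γ*t) * (∫ s in (0:ℝ)..t, Real.exp (2*γ*s)
        * (L2sq (dt1 y s) + r * (xInner (dt1 y s))^2)) :=
      mul_nonneg (Real.exp_pos _).le hINTnn
    have hMK : Phi 0 + (((r^2*δ^2/3) * Vf 0 + γ*δ) * ((5/δ) * Vf 0)
        + (2*γ*ν) * ((5/ν) * Vf 0)) ≤ K * H0 := by
      have h1 : Phi 0 ≤ ν * H0 + (δ/2) * H0^2 := by rw [hH0]; exact hPhi0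
      have h2 : Vf 0 ≤ (1 + r/3) * H0 := by rw [hH0]; exact hVf0H
      have h3 := mul_le_mul_of_nonneg_left h2
        (mul_nonneg hc1nn (show (0:ℝ) ≤ 5/δ by positivity))
      have h4 := mul_le_mul_of_nonneg_left h2 (show (0:ℝ) ≤ (2*γ*ν)*(5/ν) by positivity)
      rw [hK]
      nlinarith [h1, h3, h4, hH0nn']
    calc ν * L2sq (dx y t) + (δ/2) * L4q (y t)
          + Real.exp (-2*γ*t) * (∫ s in (0:ℝ)..t, Real.exp (2*γ*s)
            * (L2sq (dt1 y s) + r * (xInner (dt1 y s))^2))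
        ≤ (6*ν/N) * Phi t + (6*ν/N) * (Real.exp (-2*γ*t)
            * (∫ s in (0:ℝ)..t, Real.exp (2*γ*s)
              * (L2sq (dt1 y s) + r * (xInner (dt1 y s))^2))) := by
          have h5 := mul_le_mul_of_nonneg_right hfac1 hINT2
          linarith [hstep2, h5]
      _ = (6*ν/N) * (Phi t + Real.exp (-2*γ*t) * (∫ s in (0:ℝ)..t, Real.exp (2*γ*s)
            * (L2sq (dt1 y s) + r * (xInner (dt1 y s))^2))) := by ring
      _ ≤ (6*ν/N) * (Real.exp (-2*γ*t) * (Phi 0 + (((r^2*δ^2/3) * Vf 0 + γ*δ)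
            * ((5/δ) * Vf 0) + (2*γ*ν) * ((5/ν) * Vf 0)))) :=
          mul_le_mul_of_nonneg_left hstep1 hfrac.le
      _ ≤ (6*ν/N) * (Real.exp (-2*γ*t) * (K * H0)) :=
          mul_le_mul_of_nonneg_left
            (mul_le_mul_of_nonneg_left hMK (Real.exp_pos _).le) hfrac.le
      _ = 6*ν/N * K * Real.exp (-2*γ*t) * H0 := by ring
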